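/- (Bregman descent lemma / three-point property) Let h be a convex function of Legendre type, g differentiable, and suppose Lh − g is convex on a convex set C (L-smad). If x⁺ = argmin_{u∈C} { λ⟨∇g(x), u⟩ + D_h(u, x) } with 0 < λL < 1 and x in the interior of dom h, then λ g(x⁺) ≤ λ g(x) − (1 − λL) D_h(x⁺, x). -/

import Mathlib

/-!
Applying the gradient inequality to the convex function `L h - g` gives the descent inequality
`g u ≤ g x + ⟪∇g x, u - x⟫ + L D_h(u, x)`. Comparing `x⁺` with the feasible point `x` in its
defining minimisation gives `λ ⟪∇g x, x⁺ - x⟫ ≤ -D_h(x⁺, x)`, and the two combine.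
-/

open RealInnerProductSpace

theorem ConvexOn.add_le_of_hasFDerivAt {E : Type*} [NormedAddCommGroup E] [NormedSpace ℝ E]
    {C : Set E} {φ : E → ℝ} {φ' : E →L[ℝ] ℝ} {x y : E} (hφ : ConvexOn ℝ C φ)
    (hx : x ∈ C) (hy : y ∈ C) (hφ' : HasFDerivAt φ φ' x) :
    φ x + φ' (y - x) ≤ φ y := by
  have hline : ConvexOn ℝ (AffineMap.lineMap x y ⁻¹' C) (φ ∘ AffineMap.lineMap x y) :=
    hφ.comp_affineMap _
  have hderiv : HasDerivAt (φ ∘ AffineMap.lineMap x y) (φ' (y - x)) (0 : ℝ) :=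
    hφ'.comp_hasDerivAt_of_eq 0 AffineMap.hasDerivAt_lineMap
      (AffineMap.lineMap_apply_zero x y).symm
  have hslope := hline.le_slope_of_hasDerivAt (by simpa) (by simpa) one_pos hderiv
  simp only [slope, Function.comp_apply, AffineMap.lineMap_apply_zero,
    AffineMap.lineMap_apply_one, sub_zero, inv_one, one_smul, vsub_eq_sub] at hslope
  linarith

section Bregman

variable {E : Type*} [NormedAddCommGroup E] [InnerProductSpace ℝ E] [CompleteSpace E]

noncomputable def bregmanDist (h : E → ℝ) (u v : E) : ℝ :=
  h u - h v - ⟪gradient h v, u - v⟫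

theorem ConvexOn.le_add_inner_gradient_add_bregmanDist {C : Set E} {h g : E → ℝ} {L : ℝ}
    {x y : E} (hsmad : ConvexOn ℝ C (fun u => L * h u - g u))
    (hh : DifferentiableAt ℝ h x) (hg : DifferentiableAt ℝ g x) (hx : x ∈ C) (hy : y ∈ C) :
    g y ≤ g x + ⟪gradient g x, y - x⟫ + L * bregmanDist h y x := by
  have hgrad := hsmad.add_le_of_hasFDerivAt hx hy
    ((hh.hasFDerivAt.const_mul L).sub hg.hasFDerivAt)
  simp only [sub_apply, smul_apply, smul_eq_mul, ← inner_gradient_left] at hgrad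
  unfold bregmanDist
  linarith

end Bregman

theorem bregman_descent_general (n : ℕ) (C : Set (EuclideanSpace ℝ (Fin n)))
    (h g : EuclideanSpace ℝ (Fin n) → ℝ)
    (hh : Differentiable ℝ h) (hg : Differentiable ℝ g)
    (L lam : ℝ) (hlam : 0 < lam)
    (hsmad : ConvexOn ℝ C (fun u => L * h u - g u))
    (Dh : EuclideanSpace ℝ (Fin n) → EuclideanSpace ℝ (Fin n) → ℝ)
    (hDh : ∀ u v, Dh u v = h u - h v - ⟪gradient h v, u - v⟫)
    (x xp : EuclideanSpace ℝ (Fin n)) (hx : x ∈ C) (hxp : xp ∈ C)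
    (hmin : ∀ u ∈ C,
      lam * ⟪gradient g x, xp⟫ + Dh xp x ≤ lam * ⟪gradient g x, u⟫ + Dh u x) :
    lam * g xp ≤ lam * g x - (1 - lam * L) * Dh xp x := by
  obtain rfl : Dh = bregmanDist h := funext₂ hDh
  have hdescent := hsmad.le_add_inner_gradient_add_bregmanDist (hh x) (hg x) hx hxp
  have hcompare_x : lam * ⟪gradient g x, xp - x⟫ + bregmanDist h xp x ≤ 0 := by
    have := hmin x hx
    simp only [bregmanDist, sub_self, inner_zero_right] at this ⊢
    rw [inner_sub_right]
    linarith
  linear_combination mul_le_mul_of_nonneg_left hdescent hlam.le + hcompare_x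

/-- Bregman descent lemma: if `L·h - g` is convex on the convex set `C` (L-smad),
`h` convex differentiable, and `x⁺` minimizes `u ↦ λ⟨∇g(x), u⟩ + D_h(u, x)` over `C`
with `0 < λL < 1`, then `λ g(x⁺) ≤ λ g(x) - (1 - λL) D_h(x⁺, x)`. -/
theorem bregman_descent (n : ℕ) (C : Set (EuclideanSpace ℝ (Fin n))) (hC : Convex ℝ C)
    (h g : EuclideanSpace ℝ (Fin n) → ℝ)
    (hh : Differentiable ℝ h) (hg : Differentiable ℝ g)
    (hconv : ConvexOn ℝ C h)
    (L lam : ℝ) (hL : 0 < L) (hlam : 0 < lam) (hlamL : lam * L < 1)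
    (hsmad : ConvexOn ℝ C (fun u => L * h u - g u))
    (Dh : EuclideanSpace ℝ (Fin n) → EuclideanSpace ℝ (Fin n) → ℝ)
    (hDh : ∀ u v, Dh u v = h u - h v - ⟪gradient h v, u - v⟫)
    (x xp : EuclideanSpace ℝ (Fin n)) (hx : x ∈ C) (hxp : xp ∈ C)
    (hmin : ∀ u ∈ C,
      lam * ⟪gradient g x, xp⟫ + Dh xp x ≤ lam * ⟪gradient g x, u⟫ + Dh u x) :
    lam * g xp ≤ lam * g x - (1 - lam * L) * Dh xp x :=
  bregman_descent_general n C h g hh hg L lam hlam hsmad Dh hDh x xp hx hxp hmin
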